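/- arXiv:1311.5942 — 6 statements merged into one kernel-verified Lean document; each statement's English description precedes it below -/
import Mathlib

section
/- For every integer m, the greatest common divisor of m^2 - 2m + 9 and 9m^2 - 2m + 1 divides 24. -/
/-!
Eliminating `m ^ 2` gives `9 (m² - 2m + 9) - (9m² - 2m + 1) = -16 (m - 5)`, and then
`16 (m² - 2m + 9) = (m + 3) · 16 (m - 5) + 384`, so the gcd divides `384 = 2⁷ · 3`.
Since `m² - 2m + 9 = (m - 1)² + 8` is never divisible by `16`, neither is the gcd, and the only
such divisors of `384` are the divisors of `24`.
-/

theorem not_sixteen_dvd_sq_sub_two_mul_add_nine (m : ℤ) : ¬ 16 ∣ m ^ 2 - 2 * m + 9 := by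
  intro h
  have hz := (ZMod.intCast_zmod_eq_zero_iff_dvd _ 16).mpr h
  push_cast at hz
  revert hz
  generalize (m : ZMod 16) = x
  revert x
  decide

theorem dvd_384_of_dvd_of_dvd {g m : ℤ} (ha : g ∣ m ^ 2 - 2 * m + 9)
    (hb : g ∣ 9 * m ^ 2 - 2 * m + 1) : g ∣ 384 := by
  have h16 : g ∣ 16 * (m - 5) := by
    have h := dvd_sub (ha.mul_left 9) hb
    rwa [show 9 * (m ^ 2 - 2 * m + 9) - (9 * m ^ 2 - 2 * m + 1) = -(16 * (m - 5)) by ring,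
      dvd_neg] at h
  have h := dvd_sub (ha.mul_left 16) (h16.mul_left (m + 3))
  rwa [show 16 * (m ^ 2 - 2 * m + 9) - (m + 3) * (16 * (m - 5)) = 384 by ring] at h

theorem Nat.dvd_24_of_dvd_384_of_not_sixteen_dvd {n : ℕ} (h : n ∣ 384) (h16 : ¬ 16 ∣ n) :
    n ∣ 24 := by
  have key : ∀ d ∈ Nat.divisors 384, ¬ 16 ∣ d → d ∣ 24 := by decide
  exact key n (Nat.mem_divisors.mpr ⟨h, by norm_num⟩) h16

theorem stmt_3 (m : ℤ) :
    (Int.gcd (m ^ 2 - 2 * m + 9) (9 * m ^ 2 - 2 * m + 1) : ℤ) ∣ 24 := by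
  have ha := Int.gcd_dvd_left (m ^ 2 - 2 * m + 9) (9 * m ^ 2 - 2 * m + 1)
  have hb := Int.gcd_dvd_right (m ^ 2 - 2 * m + 9) (9 * m ^ 2 - 2 * m + 1)
  have h384 := dvd_384_of_dvd_of_dvd ha hb
  have h16 : ¬ (16 : ℤ) ∣ Int.gcd (m ^ 2 - 2 * m + 9) (9 * m ^ 2 - 2 * m + 1) :=
    fun h => not_sixteen_dvd_sq_sub_two_mul_add_nine m (h.trans ha)
  exact_mod_cast Nat.dvd_24_of_dvd_384_of_not_sixteen_dvd (by exact_mod_cast h384)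
    (by exact_mod_cast h16)
end

section
/- If p is a prime with p dividing both m^2 - 2m + 9 and 7m^2 - 22m + 7 for some integer m, then p = 2 or p = 3. -/
/-!
Eliminating `m ^ 2` gives `8 * m + 56 = 7 * (m ^ 2 - 2 * m + 9) - (7 * m ^ 2 - 22 * m + 7)`,
and eliminating `m` from this linear form and `m ^ 2 - 2 * m + 9` leaves the constant
`4608 = 2 ^ 9 * 3 ^ 2`, so every common divisor of the two quadratics divides `2 ^ 9 * 3 ^ 2`.
-/

theorem Int.dvd_two_pow_nine_mul_three_sq_of_dvd_of_dvd {d m : ℤ}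
    (h1 : d ∣ m ^ 2 - 2 * m + 9) (h2 : d ∣ 7 * m ^ 2 - 22 * m + 7) : d ∣ 2 ^ 9 * 3 ^ 2 := by
  have hlin : d ∣ 8 * m + 56 := by
    have h := dvd_sub (h1.mul_left 7) h2
    rwa [show 7 * (m ^ 2 - 2 * m + 9) - (7 * m ^ 2 - 22 * m + 7) = 8 * m + 56 by ring] at h
  have h := dvd_sub (h1.mul_left 64) (hlin.mul_left (8 * m - 72))
  rwa [show 64 * (m ^ 2 - 2 * m + 9) - (8 * m - 72) * (8 * m + 56) = 2 ^ 9 * 3 ^ 2 by ring] at h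

theorem Nat.Prime.eq_two_or_eq_three_of_dvd_two_pow_mul_three_pow {p a b : ℕ} (hp : p.Prime)
    (h : p ∣ 2 ^ a * 3 ^ b) : p = 2 ∨ p = 3 := by
  rcases hp.dvd_mul.mp h with h2 | h3
  · exact .inl <| (Nat.prime_dvd_prime_iff_eq hp Nat.prime_two).mp (hp.dvd_of_dvd_pow h2)
  · exact .inr <| (Nat.prime_dvd_prime_iff_eq hp Nat.prime_three).mp (hp.dvd_of_dvd_pow h3)

theorem stmt_5 (m : ℤ) (p : ℕ) (hp : p.Prime)
    (h1 : (p : ℤ) ∣ m ^ 2 - 2 * m + 9) (h2 : (p : ℤ) ∣ 7 * m ^ 2 - 22 * m + 7) :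
    p = 2 ∨ p = 3 := by
  have h : (p : ℤ) ∣ 2 ^ 9 * 3 ^ 2 := Int.dvd_two_pow_nine_mul_three_sq_of_dvd_of_dvd h1 h2
  exact hp.eq_two_or_eq_three_of_dvd_two_pow_mul_three_pow (a := 9) (b := 2) (by exact_mod_cast h)
end

section
/- If p is an odd prime dividing both 7m^2 - 22m + 7 and 9m^2 - 2m + 1 for some integer m, then p = 3. -/
theorem stmt_6 (m : ℤ) (p : ℕ) (hp : p.Prime) (hodd : Odd p)
    (h1 : (p : ℤ) ∣ 7 * m ^ 2 - 22 * m + 7) (h2 : (p : ℤ) ∣ 9 * m ^ 2 - 2 * m + 1) :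
    p = 3 := by
  obtain ⟨a, ha⟩ := h1
  obtain ⟨b, hb⟩ := h2
  -- p ∣ 576 via an explicit integer combination
  have h576 : (p : ℤ) ∣ 576 := by
    refine ⟨(2116 - 7*(23*m+237)) * b + (9*(23*m+237) - 2116) * a, ?_⟩
    linear_combination (2116 - 7*(23*m+237)) * hb + (9*(23*m+237) - 2116) * ha
  have h576' : p ∣ 576 := by exact_mod_cast h576
  have hne2 : p ≠ 2 := by rcases hodd with ⟨k, hk⟩; omega
  have hnd : ¬ p ∣ 2 := fun h => hne2 ((Nat.prime_dvd_prime_iff_eq hp Nat.prime_two).mp h)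
  have hcop : Nat.Coprime p 64 := by
    rw [show (64 : ℕ) = 2 ^ 6 by norm_num]
    exact Nat.Coprime.pow_right _ ((hp.coprime_iff_not_dvd).mpr hnd)
  have h9 : p ∣ 9 := hcop.dvd_of_dvd_mul_left (by simpa using h576')
  have h3 : p ∣ 3 := hp.dvd_of_dvd_pow (n := 2) (by simpa [pow_two] using h9)
  exact (Nat.prime_dvd_prime_iff_eq hp Nat.prime_three).mp h3
end

section
/- There is no positive integer m divisible by 3 such that 9m^2 - 2m + 1 is a power of 2. -/
lemma aux7 : ∀ x : ZMod 16, 9 * x ^ 2 - 2 * x + 1 ≠ 0 := by decide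

theorem stmt_7 : ¬ ∃ m : ℤ, 0 < m ∧ 3 ∣ m ∧ ∃ e : ℕ, 9 * m ^ 2 - 2 * m + 1 = 2 ^ e := by
  rintro ⟨m, hm, h3, e, he⟩
  have hm3 : 3 ≤ m := by omega
  have hge : (76 : ℤ) ≤ 9 * m ^ 2 - 2 * m + 1 := by nlinarith
  by_cases h4 : 4 ≤ e
  · have h16 : (16 : ℤ) ∣ 9 * m ^ 2 - 2 * m + 1 := by
      rw [he]
      have : (2 : ℤ) ^ 4 ∣ 2 ^ e := pow_dvd_pow 2 h4
      simpa using this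
    have hz : ((9 * m ^ 2 - 2 * m + 1 : ℤ) : ZMod 16) = 0 :=
      (ZMod.intCast_zmod_eq_zero_iff_dvd _ 16).mpr h16
    push_cast at hz
    exact aux7 (m : ZMod 16) hz
  · interval_cases e <;> omega
end

section
/- If m is a positive integer such that m^2 - 2m + 9 = 2^a * 3^b and 9m^2 - 2m + 1 = 2^e * 3^f for some natural numbers a, b, e, f, then m = 1 or m = 5. -/
private lemma cast_zmod (n : ℕ) [NeZero n] (m r : ℤ) (h : (n:ℤ) ∣ m - r) :
    (m : ZMod n) = (r : ZMod n) := by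
  have h0 : ((m - r : ℤ) : ZMod n) = 0 := (ZMod.intCast_zmod_eq_zero_iff_dvd _ n).mpr h
  push_cast at h0
  rwa [sub_eq_zero] at h0

theorem stmt_9 (m : ℤ) (hm : 0 < m)
    (h1 : ∃ a b : ℕ, m ^ 2 - 2 * m + 9 = 2 ^ a * 3 ^ b)
    (h2 : ∃ e f : ℕ, 9 * m ^ 2 - 2 * m + 1 = 2 ^ e * 3 ^ f) :
    m = 1 ∨ m = 5 := by
  obtain ⟨a, b, hab⟩ := h1
  obtain ⟨e, f, hef⟩ := h2
  -- 16 does not divide either expression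
  have h16A : ¬ (16:ℤ) ∣ (m ^ 2 - 2 * m + 9) := by
    intro h
    have h0 : ((m ^ 2 - 2 * m + 9 : ℤ) : ZMod 16) = 0 :=
      (ZMod.intCast_zmod_eq_zero_iff_dvd _ 16).mpr h
    push_cast at h0
    have hall : ∀ x : ZMod 16, x ^ 2 - 2 * x + 9 ≠ 0 := by decide
    exact hall _ h0
  have h16B : ¬ (16:ℤ) ∣ (9 * m ^ 2 - 2 * m + 1) := by
    intro h
    have h0 : ((9 * m ^ 2 - 2 * m + 1 : ℤ) : ZMod 16) = 0 :=
      (ZMod.intCast_zmod_eq_zero_iff_dvd _ 16).mpr h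
    push_cast at h0
    have hall : ∀ x : ZMod 16, 9 * x ^ 2 - 2 * x + 1 ≠ 0 := by decide
    exact hall _ h0
  have ha3 : a ≤ 3 := by
    by_contra h
    push_neg at h
    refine h16A ?_
    rw [hab]
    refine dvd_mul_of_dvd_left ?_ _
    calc (16:ℤ) = 2 ^ 4 := by norm_num
    _ ∣ 2 ^ a := pow_dvd_pow 2 h
  have he3 : e ≤ 3 := by
    by_contra h
    push_neg at h
    refine h16B ?_
    rw [hef]
    refine dvd_mul_of_dvd_left ?_ _
    calc (16:ℤ) = 2 ^ 4 := by norm_num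
    _ ∣ 2 ^ e := pow_dvd_pow 2 h
  have h2a : (2:ℤ) ^ a ≤ 8 := by interval_cases a <;> norm_num
  have h2e : (2:ℤ) ^ e ≤ 8 := by interval_cases e <;> norm_num
  have hr : m % 3 = 0 ∨ m % 3 = 1 ∨ m % 9 = 2 ∨ m % 9 = 5 ∨ m % 9 = 8 := by omega
  rcases hr with hr | hr | hr | hr | hr
  · -- m ≡ 0 mod 3 : 3 ∤ B, so f = 0, B ≤ 8, contradiction
    exfalso
    have hm3 : (m : ZMod 3) = 0 := by
      have := cast_zmod 3 m 0 (by omega); push_cast at this; exact this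
    have h3 : ¬ (3:ℤ) ∣ (9 * m ^ 2 - 2 * m + 1) := by
      intro h
      have h0 := (ZMod.intCast_zmod_eq_zero_iff_dvd (9 * m ^ 2 - 2 * m + 1) 3).mpr h
      push_cast at h0
      rw [hm3] at h0
      revert h0; decide
    have hf : f = 0 := by
      by_contra hf0
      exact h3 (hef ▸ dvd_mul_of_dvd_right (dvd_pow_self 3 hf0) _)
    have hB : 9 * m ^ 2 - 2 * m + 1 ≤ 8 := by rw [hef, hf]; simpa using h2e
    have hm3' : 3 ≤ m := by omega
    nlinarith
  · -- m ≡ 1 mod 3 : 3 ∤ A, so b = 0, A ≤ 8, m = 1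
    have hm3 : (m : ZMod 3) = 1 := by
      have := cast_zmod 3 m 1 (by omega); push_cast at this; exact this
    have h3 : ¬ (3:ℤ) ∣ (m ^ 2 - 2 * m + 9) := by
      intro h
      have h0 := (ZMod.intCast_zmod_eq_zero_iff_dvd (m ^ 2 - 2 * m + 9) 3).mpr h
      push_cast at h0
      rw [hm3] at h0
      revert h0; decide
    have hb : b = 0 := by
      by_contra hb0
      exact h3 (hab ▸ dvd_mul_of_dvd_right (dvd_pow_self 3 hb0) _)
    have hA : m ^ 2 - 2 * m + 9 ≤ 8 := by rw [hab, hb]; simpa using h2a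
    have hsq : (m - 1) ^ 2 ≤ 0 := by nlinarith
    have hsq' : (m - 1) ^ 2 = 0 := le_antisymm hsq (sq_nonneg _)
    have : m - 1 = 0 := by exact pow_eq_zero_iff (n := 2) (by norm_num) |>.mp hsq'
    omega
  · -- m ≡ 2 mod 9 : 9 ∤ B, so f ≤ 1, B ≤ 24, contradiction
    exfalso
    have hm9 : (m : ZMod 9) = 2 := by
      have := cast_zmod 9 m 2 (by omega); push_cast at this; exact this
    have h9 : ¬ (9:ℤ) ∣ (9 * m ^ 2 - 2 * m + 1) := by
      intro h
      have h0 := (ZMod.intCast_zmod_eq_zero_iff_dvd (9 * m ^ 2 - 2 * m + 1) 9).mpr h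
      push_cast at h0
      rw [hm9] at h0
      revert h0; decide
    have hf : f ≤ 1 := by
      by_contra hf0
      push_neg at hf0
      refine h9 ?_
      rw [hef]
      refine dvd_mul_of_dvd_right ?_ _
      calc (9:ℤ) = 3 ^ 2 := by norm_num
      _ ∣ 3 ^ f := pow_dvd_pow 3 hf0
    have h3f : (3:ℤ) ^ f ≤ 3 := by interval_cases f <;> norm_num
    have hB : 9 * m ^ 2 - 2 * m + 1 ≤ 24 := by
      rw [hef]
      calc (2:ℤ) ^ e * 3 ^ f ≤ 8 * 3 :=
        mul_le_mul h2e h3f (by positivity) (by norm_num)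
      _ = 24 := by norm_num
    have hm2 : 2 ≤ m := by omega
    nlinarith
  · -- m ≡ 5 mod 9 : 9 ∤ A, so b ≤ 1, A ≤ 24, m = 5
    have hm9 : (m : ZMod 9) = 5 := by
      have := cast_zmod 9 m 5 (by omega); push_cast at this; exact this
    have h9 : ¬ (9:ℤ) ∣ (m ^ 2 - 2 * m + 9) := by
      intro h
      have h0 := (ZMod.intCast_zmod_eq_zero_iff_dvd (m ^ 2 - 2 * m + 9) 9).mpr h
      push_cast at h0
      rw [hm9] at h0
      revert h0; decide
    have hb : b ≤ 1 := by
      by_contra hb0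
      push_neg at hb0
      refine h9 ?_
      rw [hab]
      refine dvd_mul_of_dvd_right ?_ _
      calc (9:ℤ) = 3 ^ 2 := by norm_num
      _ ∣ 3 ^ b := pow_dvd_pow 3 hb0
    have h3b : (3:ℤ) ^ b ≤ 3 := by interval_cases b <;> norm_num
    have hA : m ^ 2 - 2 * m + 9 ≤ 24 := by
      rw [hab]
      calc (2:ℤ) ^ a * 3 ^ b ≤ 8 * 3 :=
        mul_le_mul h2a h3b (by positivity) (by norm_num)
      _ = 24 := by norm_num
    have hm5 : m ≤ 5 := by nlinarith
    omega
  · -- m ≡ 8 mod 9 : 9 ∤ A, so b ≤ 1, A ≤ 24, m ≤ 5, contradiction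
    exfalso
    have hm9 : (m : ZMod 9) = 8 := by
      have := cast_zmod 9 m 8 (by omega); push_cast at this; exact this
    have h9 : ¬ (9:ℤ) ∣ (m ^ 2 - 2 * m + 9) := by
      intro h
      have h0 := (ZMod.intCast_zmod_eq_zero_iff_dvd (m ^ 2 - 2 * m + 9) 9).mpr h
      push_cast at h0
      rw [hm9] at h0
      revert h0; decide
    have hb : b ≤ 1 := by
      by_contra hb0
      push_neg at hb0
      refine h9 ?_
      rw [hab]
      refine dvd_mul_of_dvd_right ?_ _
      calc (9:ℤ) = 3 ^ 2 := by norm_num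
      _ ∣ 3 ^ b := pow_dvd_pow 3 hb0
    have h3b : (3:ℤ) ^ b ≤ 3 := by interval_cases b <;> norm_num
    have hA : m ^ 2 - 2 * m + 9 ≤ 24 := by
      rw [hab]
      calc (2:ℤ) ^ a * 3 ^ b ≤ 8 * 3 :=
        mul_le_mul h2a h3b (by positivity) (by norm_num)
      _ = 24 := by norm_num
    have hm5 : m ≤ 5 := by nlinarith
    omega
end

section
/- Let m, a2, a4, b2, b3, c2, c3, c4 be real numbers satisfying c2 + a2 + b2 = m, c3 + b3 = m, b2 ≠ 0, b3 ≠ 0, and the two equations a4*m - a2*c4*b3 - b2*a4*c3 = 0 and -m^2*a4 + m*a4*c2 - m*b3*c4 + m*a2*a4 + a2*b3*c4 + a4*b2*c3 + c4*b3*c2 = 0. Then a4 + c4 = 0. -/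
theorem stmt_11 (m a2 a4 b2 b3 c2 c3 c4 : ℝ)
    (h1 : c2 + a2 + b2 = m) (h2 : c3 + b3 = m) (hb2 : b2 ≠ 0) (hb3 : b3 ≠ 0)
    (e1 : a4 * m - a2 * c4 * b3 - b2 * a4 * c3 = 0)
    (e2 : -m ^ 2 * a4 + m * a4 * c2 - m * b3 * c4 + m * a2 * a4 + a2 * b3 * c4
        + a4 * b2 * c3 + c4 * b3 * c2 = 0) :
    a4 + c4 = 0 := by
  have hfact : -b2 * b3 * (a4 + c4) = 0 := by
    linear_combination e2 - (a4 * m + b3 * c4) * h1 - b2 * a4 * h2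
  rcases mul_eq_zero.mp hfact with h | h
  · exact absurd (mul_eq_zero.mp h) (by simp [hb2, hb3])
  · exact h
end
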